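/- Let Δt > 0 and M, c, C₀ > 0. Let θ : ℝ² → ℝ be C¹ and ℤ²-periodic, and let p : ℝ² → ℝ² be C¹ and ℤ²-periodic with |p(x)| ≤ M for all x. Suppose that for every z ∈ [0,1] the map F_z(x) = x − z Δt p(x) is a ℤ²-equivariant C¹ diffeomorphism whose Jacobian determinant δ_z(x) = det(DF_z(x)) satisfies δ_z(x) ≥ c for all x, and suppose moreover that δ₁(x) ≤ C₀ for all x. Then ∫_Q (θ(x) − θ(x − Δt p(x)))² δ₁(x) dx ≤ (C₀ M² Δt² / c) ∫_Q |∇θ(x)|² dx, where Q = [0,1]². -/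

import Mathlib

/-!
Along the characteristic, θ(x) − θ(x − Δt p(x)) = ∫₀¹ Dθ(F_z x)(Δt p(x)) dz with
F_z x = x − zΔt p(x), so by Jensen its square is at most M²Δt² ∫₀¹ |∇θ(F_z x)|² dz, while
δ₁ ≤ C₀. After exchanging the integrals, each slice ∫_Q |∇θ ∘ F_z|² is at most (1/c) ∫_Q |∇θ|²:
since F_z commutes with the ℤ²-translations it maps the fundamental domain Q onto another
fundamental domain, on which the periodic function |∇θ|² has the same integral, and the change
of variables costs the Jacobian δ_z ≥ c.
-/

open MeasureTheory

noncomputable section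

abbrev E2 : Type := EuclideanSpace ℝ (Fin 2)

/-- The unit fundamental domain `Q = [0,1]²`. -/
def Q : Set E2 := {x | ∀ i, x i ∈ Set.Icc (0:ℝ) 1}

/-- The vector in `ℝ²` with integer coordinates `k`. -/
def intVec (k : Fin 2 → ℤ) : E2 := WithLp.toLp 2 (fun i => (k i : ℝ))

open Module Submodule

section Lattice

variable {E ι : Type*} [NormedAddCommGroup E] [NormedSpace ℝ E] [MeasurableSpace E]
  [BorelSpace E] [Fintype ι] (b : Basis ι ℝ E) (μ : Measure E) [μ.IsAddHaarMeasure]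

theorem isAddFundamentalDomain_image_fundamentalDomain {F : E → E} (hF : Differentiable ℝ F)
    (hbij : Function.Bijective F)
    (hFequiv : ∀ γ ∈ span ℤ (Set.range b), ∀ x, F (x + γ) = F x + γ) :
    IsAddFundamentalDomain (span ℤ (Set.range b)).toAddSubgroup
      (F '' ZSpan.fundamentalDomain b) μ := by
  have := b.finiteDimensional_of_finite
  let e : E ≃ E := Equiv.ofBijective F hbij
  have hemb : MeasurableEmbedding F := hF.continuous.measurableEmbedding hbij.1
  have hpre : ∀ s, e.symm ⁻¹' s = F '' s := fun s => (e.image_eq_preimage_symm s).symm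
  have hmeas : Measurable e.symm := fun s hs => by
    rw [hpre]; exact hemb.measurableSet_image.2 hs
  refine (ZSpan.isAddFundamentalDomain' b μ).image_of_equiv e
    ⟨hmeas, .mk fun s hs h0 => ?_⟩ (Equiv.refl _) fun γ x => ?_
  · rw [Measure.map_apply hmeas hs, hpre]
    exact addHaar_image_eq_zero_of_differentiableOn_of_addHaar_eq_zero μ hF.differentiableOn h0
  · change F (γ + x) = γ + F x
    rw [add_comm, hFequiv γ γ.2, add_comm]

theorem setIntegral_parallelepiped_abs_det_mul_comp {F : E → E} (hF : Differentiable ℝ F)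
    (hbij : Function.Bijective F)
    (hFequiv : ∀ γ ∈ span ℤ (Set.range b), ∀ x, F (x + γ) = F x + γ)
    {g : E → ℝ} (hg : ∀ γ ∈ span ℤ (Set.range b), ∀ x, g (x + γ) = g x) :
    ∫ x in parallelepiped b, |(fderiv ℝ F x).det| * g (F x) ∂μ
      = ∫ x in parallelepiped b, g x ∂μ := by
  have := b.finiteDimensional_of_finite
  have : Countable (span ℤ (Set.range b)).toAddSubgroup :=
    inferInstanceAs (Countable (span ℤ (Set.range b)))
  have hD := ZSpan.fundamentalDomain_ae_parallelepiped b μ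
  rw [← setIntegral_congr_set hD, ← setIntegral_congr_set hD]
  calc ∫ x in ZSpan.fundamentalDomain b, |(fderiv ℝ F x).det| * g (F x) ∂μ
      = ∫ y in F '' ZSpan.fundamentalDomain b, g y ∂μ :=
        (integral_image_eq_integral_abs_det_fderiv_smul μ
          (ZSpan.fundamentalDomain_measurableSet b)
          (fun x _ => (hF x).hasFDerivAt.hasFDerivWithinAt) hbij.1.injOn g).symm
    _ = ∫ y in ZSpan.fundamentalDomain b, g y ∂μ :=
        (isAddFundamentalDomain_image_fundamentalDomain b μ hF hbij hFequiv).setIntegral_eq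
          (ZSpan.isAddFundamentalDomain' b μ) fun γ y => by
            change g (γ + y) = g y; rw [add_comm]; exact hg γ γ.2 y

theorem setIntegral_parallelepiped_comp_le_div {F : E → E} (hF : ContDiff ℝ 1 F)
    (hbij : Function.Bijective F)
    (hFequiv : ∀ γ ∈ span ℤ (Set.range b), ∀ x, F (x + γ) = F x + γ)
    {c : ℝ} (hc : 0 < c) (hdet : ∀ x, c ≤ (fderiv ℝ F x).det)
    {g : E → ℝ} (hg : Continuous g) (hg0 : ∀ x, 0 ≤ g x)
    (hgper : ∀ γ ∈ span ℤ (Set.range b), ∀ x, g (x + γ) = g x) :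
    ∫ x in parallelepiped b, g (F x) ∂μ ≤ (∫ x in parallelepiped b, g x ∂μ) / c := by
  have := b.finiteDimensional_of_finite
  have hP := b.parallelepiped.isCompact
  rw [Basis.coe_parallelepiped] at hP
  have hdetc : Continuous fun x => (fderiv ℝ F x).det :=
    ContinuousLinearMap.continuous_det.comp (hF.continuous_fderiv one_ne_zero)
  rw [le_div_iff₀ hc, ← integral_mul_const,
    ← setIntegral_parallelepiped_abs_det_mul_comp b μ (hF.differentiable one_ne_zero) hbij
      hFequiv hgper]
  refine setIntegral_mono_on ?_ ?_ hP.measurableSet fun x _ => ?_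
  · exact ((hg.comp hF.continuous).mul continuous_const).continuousOn.integrableOn_compact hP
  · exact (hdetc.abs.mul (hg.comp hF.continuous)).continuousOn.integrableOn_compact hP
  · rw [abs_of_pos (hc.trans_le (hdet x)), mul_comm]
    exact mul_le_mul_of_nonneg_right (hdet x) (hg0 _)

end Lattice

theorem setIntegral_setIntegral_le_of_forall_le {α β : Type*}
    [TopologicalSpace α] [MeasurableSpace α] [OpensMeasurableSpace α] [T2Space α]
    [TopologicalSpace β] [MeasurableSpace β] [OpensMeasurableSpace β] [SecondCountableTopology β]
    [T2Space β]
    {μ : Measure α} {ν : Measure β} [IsFiniteMeasureOnCompacts μ] [IsFiniteMeasureOnCompacts ν]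
    [SFinite μ] [SFinite ν]
    {s : Set α} {t : Set β} (hs : IsCompact s) (ht : IsCompact t)
    {h : α → β → ℝ} (hh : Continuous (Function.uncurry h)) {B : ℝ}
    (hB : ∀ y ∈ t, ∫ x in s, h x y ∂μ ≤ B) :
    ∫ x in s, ∫ y in t, h x y ∂ν ∂μ ≤ ν.real t * B := by
  have hint : Integrable (Function.uncurry h) ((μ.restrict s).prod (ν.restrict t)) := by
    rw [Measure.prod_restrict]
    exact hh.continuousOn.integrableOn_compact (hs.prod ht)
  rw [integral_integral_swap hint, ← smul_eq_mul, ← setIntegral_const]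
  exact setIntegral_mono_on hint.integral_prod_right (integrableOn_const ht.measure_lt_top.ne)
    ht.measurableSet hB

section Segment

variable {E : Type*} [NormedAddCommGroup E] [NormedSpace ℝ E]

theorem sq_integral_le_integral_sq {α : Type*} [MeasurableSpace α] {μ : Measure α}
    [IsProbabilityMeasure μ] {f : α → ℝ} (hf : MemLp f 2 μ) :
    (∫ x, f x ∂μ) ^ 2 ≤ ∫ x, f x ^ 2 ∂μ := by
  have := ProbabilityTheory.variance_nonneg f μ
  rw [ProbabilityTheory.variance_eq_sub hf] at this
  simpa [sub_nonneg] using this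

theorem sub_eq_integral_fderiv_apply {f : E → ℝ} (hf : ContDiff ℝ 1 f) (x v : E) :
    f x - f (x - v) = ∫ t in Set.Icc (0:ℝ) 1, fderiv ℝ f (x - t • v) v := by
  have hderiv : ∀ t : ℝ,
      HasDerivAt (fun t : ℝ => f (x - t • v)) (fderiv ℝ f (x - t • v) (-v)) t :=
    fun t => ((hf.differentiable one_ne_zero) _).hasFDerivAt.comp_hasDerivAt t
      (by simpa using ((hasDerivAt_id t).smul_const v).const_sub x)
  have hcont : Continuous fun t : ℝ => fderiv ℝ f (x - t • v) (-v) := by fun_prop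
  have := intervalIntegral.integral_eq_sub_of_hasDerivAt (fun t _ => hderiv t)
    (hcont.intervalIntegrable 0 1)
  simp only [map_neg, intervalIntegral.integral_neg, one_smul, zero_smul, sub_zero] at this
  rw [integral_Icc_eq_integral_Ioc, ← intervalIntegral.integral_of_le zero_le_one]
  linarith

theorem sq_sub_le_sq_norm_mul_integral_sq_norm_fderiv {f : E → ℝ} (hf : ContDiff ℝ 1 f)
    (x v : E) :
    (f x - f (x - v)) ^ 2 ≤ ‖v‖ ^ 2 * ∫ t in Set.Icc (0:ℝ) 1, ‖fderiv ℝ f (x - t • v)‖ ^ 2 := by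
  have : IsProbabilityMeasure (volume.restrict (Set.Icc (0:ℝ) 1)) := ⟨by simp⟩
  have hcont : Continuous fun t : ℝ => fderiv ℝ f (x - t • v) := by fun_prop
  rw [sub_eq_integral_fderiv_apply hf, ← integral_const_mul]
  refine (sq_integral_le_integral_sq ?_).trans (integral_mono ?_ ?_ fun t => ?_)
  · exact (memLp_two_iff_integrable_sq (hcont.clm_apply continuous_const).aestronglyMeasurable).2
      ((hcont.clm_apply continuous_const).pow 2).integrableOn_Icc
  · exact ((hcont.clm_apply continuous_const).pow 2).integrableOn_Icc
  · exact (continuous_const.mul (hcont.norm.pow 2)).integrableOn_Icc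
  · rw [← mul_pow, ← sq_abs, ← Real.norm_eq_abs, mul_comm]
    exact pow_le_pow_left₀ (norm_nonneg _) (ContinuousLinearMap.le_opNorm _ _) 2

theorem sq_sub_sub_smul_le {f : E → ℝ} (hf : ContDiff ℝ 1 f) (τ : ℝ) {w : E} {M : ℝ}
    (hw : ‖w‖ ≤ M) (x : E) :
    (f x - f (x - τ • w)) ^ 2
      ≤ M ^ 2 * τ ^ 2 * ∫ z in Set.Icc (0:ℝ) 1, ‖fderiv ℝ f (x - (z * τ) • w)‖ ^ 2 := by
  have hτw : ‖τ • w‖ ^ 2 ≤ M ^ 2 * τ ^ 2 := by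
    rw [norm_smul, mul_pow, Real.norm_eq_abs, sq_abs, mul_comm]
    gcongr
  have hI : 0 ≤ ∫ z in Set.Icc (0:ℝ) 1, ‖fderiv ℝ f (x - (z * τ) • w)‖ ^ 2 :=
    setIntegral_nonneg measurableSet_Icc fun _ _ => sq_nonneg _
  have := sq_sub_le_sq_norm_mul_integral_sq_norm_fderiv hf x (τ • w)
  simp only [smul_smul] at this
  exact this.trans (mul_le_mul_of_nonneg_right hτw hI)

theorem Function.Periodic.fderiv {F : Type*} [NormedAddCommGroup F] [NormedSpace ℝ F]
    {f : E → F} {a : E} (hf : Function.Periodic f a) :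
    Function.Periodic (fderiv ℝ f) a := fun x => by
  rw [← fderiv_comp_add_right, funext hf]

end Segment

theorem Q_eq_parallelepiped : Q = parallelepiped (EuclideanSpace.basisFun (Fin 2) ℝ).toBasis := by
  rw [parallelepiped_basis_eq]
  rfl

theorem exists_intVec_eq_of_mem_span {γ : E2}
    (hγ : γ ∈ span ℤ (Set.range (EuclideanSpace.basisFun (Fin 2) ℝ).toBasis)) :
    ∃ k, γ = intVec k := by
  choose k hk using (Basis.mem_span_iff_repr_mem ℤ _ γ).1 hγ
  exact ⟨k, by ext i; simpa [intVec] using (hk i).symm⟩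

theorem isCompact_Q : IsCompact Q := by
  have := (EuclideanSpace.basisFun (Fin 2) ℝ).toBasis.parallelepiped.isCompact
  rwa [Basis.coe_parallelepiped, ← Q_eq_parallelepiped] at this

theorem setIntegral_Q_comp_le_div {F : E2 → E2} (hF : ContDiff ℝ 1 F)
    (hbij : Function.Bijective F) (hFequiv : ∀ x k, F (x + intVec k) = F x + intVec k)
    {c : ℝ} (hc : 0 < c) (hdet : ∀ x, c ≤ (fderiv ℝ F x).det)
    {g : E2 → ℝ} (hg : Continuous g) (hg0 : ∀ x, 0 ≤ g x)
    (hgper : ∀ x k, g (x + intVec k) = g x) :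
    ∫ x in Q, g (F x) ≤ (∫ x in Q, g x) / c := by
  rw [Q_eq_parallelepiped]
  refine setIntegral_parallelepiped_comp_le_div _ volume hF hbij (fun γ hγ x => ?_) hc hdet hg
    hg0 (fun γ hγ x => ?_)
  all_goals obtain ⟨k, rfl⟩ := exists_intVec_eq_of_mem_span hγ
  exacts [hFequiv x k, hgper x k]

theorem weighted_characteristic_difference_estimate_general
    (Δt M c C₀ : ℝ) (hc : 0 < c)
    (θ : E2 → ℝ) (p : E2 → E2)
    (hθ : ContDiff ℝ 1 θ)
    (hθper : ∀ (x : E2) (k : Fin 2 → ℤ), θ (x + intVec k) = θ x)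
    (hp : ContDiff ℝ 1 p)
    (hpbdd : ∀ x : E2, ‖p x‖ ≤ M)
    (hdiffeo : ∀ z ∈ Set.Icc (0:ℝ) 1,
      Function.Bijective (fun x : E2 => x - (z * Δt) • p x))
    (hequiv : ∀ z ∈ Set.Icc (0:ℝ) 1, ∀ (x : E2) (k : Fin 2 → ℤ),
      (x + intVec k) - (z * Δt) • p (x + intVec k)
        = (x - (z * Δt) • p x) + intVec k)
    (hdetlb : ∀ z ∈ Set.Icc (0:ℝ) 1, ∀ x : E2,
      c ≤ (fderiv ℝ (fun y : E2 => y - (z * Δt) • p y) x).det)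
    (hdetub : ∀ x : E2, (fderiv ℝ (fun y : E2 => y - Δt • p y) x).det ≤ C₀) :
    ∫ x in Q, (θ x - θ (x - Δt • p x)) ^ 2
        * (fderiv ℝ (fun y : E2 => y - Δt • p y) x).det
      ≤ (C₀ * M ^ 2 * Δt ^ 2 / c) * ∫ x in Q, ‖fderiv ℝ θ x‖ ^ 2 := by
  set F₁ : E2 → E2 := fun y => y - Δt • p y
  set g : E2 → ℝ := fun y => ‖fderiv ℝ θ y‖ ^ 2
  have hg : Continuous g := (hθ.continuous_fderiv one_ne_zero).norm.pow 2
  have hgF : Continuous fun q : E2 × ℝ => g (q.1 - (q.2 * Δt) • p q.1) := by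
    have := hp.continuous; fun_prop
  have hdet₁ : ∀ x, c ≤ (fderiv ℝ F₁ x).det := by simpa using hdetlb 1 ⟨zero_le_one, le_rfl⟩
  have hpoint : ∀ x, (θ x - θ (x - Δt • p x)) ^ 2 * (fderiv ℝ F₁ x).det
      ≤ C₀ * M ^ 2 * Δt ^ 2 * ∫ z in Set.Icc (0:ℝ) 1, g (x - (z * Δt) • p x) := fun x =>
    (mul_le_mul (sq_sub_sub_smul_le hθ Δt (hpbdd x) x) (hdetub x) (hc.le.trans (hdet₁ x))
      (by positivity)).trans_eq (by ring)
  have hslice : ∀ z ∈ Set.Icc (0:ℝ) 1, ∫ x in Q, g (x - (z * Δt) • p x) ≤ (∫ x in Q, g x) / c :=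
    fun z hz => setIntegral_Q_comp_le_div (by fun_prop) (hdiffeo z hz) (hequiv z hz) hc
      (hdetlb z hz) hg (fun _ => sq_nonneg _)
      (fun x k => congrArg (‖·‖ ^ 2) (Function.Periodic.fderiv (hθper · k) x))
  have hC₀ : 0 ≤ C₀ := (hc.le.trans (hdet₁ 0)).trans (hdetub 0)
  calc ∫ x in Q, (θ x - θ (x - Δt • p x)) ^ 2 * (fderiv ℝ F₁ x).det
      ≤ ∫ x in Q, C₀ * M ^ 2 * Δt ^ 2 * ∫ z in Set.Icc (0:ℝ) 1, g (x - (z * Δt) • p x) := by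
        refine integral_mono_of_nonneg (.of_forall fun x => ?_) ?_ (.of_forall hpoint)
        · exact mul_nonneg (sq_nonneg _) (hc.le.trans (hdet₁ x))
        · exact (continuous_const.mul (continuous_parametric_integral_of_continuous hgF
            isCompact_Icc)).continuousOn.integrableOn_compact isCompact_Q
    _ = C₀ * M ^ 2 * Δt ^ 2 * ∫ x in Q, ∫ z in Set.Icc (0:ℝ) 1, g (x - (z * Δt) • p x) :=
        integral_const_mul _ _
    _ ≤ C₀ * M ^ 2 * Δt ^ 2 * (volume.real (Set.Icc (0:ℝ) 1) * ((∫ x in Q, g x) / c)) := by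
        gcongr
        exact setIntegral_setIntegral_le_of_forall_le isCompact_Q isCompact_Icc hgF hslice
    _ = C₀ * M ^ 2 * Δt ^ 2 / c * ∫ x in Q, ‖fderiv ℝ θ x‖ ^ 2 := by
        rw [Real.volume_real_Icc_of_le zero_le_one]; ring

/-- Weighted characteristic-difference estimate: with `F_z(x) = x − zΔt p(x)` a
`ℤ²`-equivariant `C¹` diffeomorphism for each `z ∈ [0,1]`, with Jacobian determinant
`δ_z ≥ c > 0` and `δ₁ ≤ C₀`, and `|p| ≤ M`,
`∫_Q (θ(x) − θ(x − Δt p(x)))² δ₁(x) dx ≤ (C₀ M² Δt² / c) ∫_Q |∇θ|² dx`. -/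
theorem weighted_characteristic_difference_estimate
    (Δt M c C₀ : ℝ) (hΔt : 0 < Δt) (hM : 0 < M) (hc : 0 < c) (hC₀ : 0 < C₀)
    (θ : E2 → ℝ) (p : E2 → E2)
    (hθ : ContDiff ℝ 1 θ)
    (hθper : ∀ (x : E2) (k : Fin 2 → ℤ), θ (x + intVec k) = θ x)
    (hp : ContDiff ℝ 1 p)
    (hpper : ∀ (x : E2) (k : Fin 2 → ℤ), p (x + intVec k) = p x)
    (hpbdd : ∀ x : E2, ‖p x‖ ≤ M)
    (hdiffeo : ∀ z ∈ Set.Icc (0:ℝ) 1,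
      Function.Bijective (fun x : E2 => x - (z * Δt) • p x))
    (hequiv : ∀ z ∈ Set.Icc (0:ℝ) 1, ∀ (x : E2) (k : Fin 2 → ℤ),
      (x + intVec k) - (z * Δt) • p (x + intVec k)
        = (x - (z * Δt) • p x) + intVec k)
    (hdetlb : ∀ z ∈ Set.Icc (0:ℝ) 1, ∀ x : E2,
      c ≤ (fderiv ℝ (fun y : E2 => y - (z * Δt) • p y) x).det)
    (hdetub : ∀ x : E2, (fderiv ℝ (fun y : E2 => y - Δt • p y) x).det ≤ C₀) :
    ∫ x in Q, (θ x - θ (x - Δt • p x)) ^ 2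
        * (fderiv ℝ (fun y : E2 => y - Δt • p y) x).det
      ≤ (C₀ * M ^ 2 * Δt ^ 2 / c) * ∫ x in Q, ‖fderiv ℝ θ x‖ ^ 2 :=
  weighted_characteristic_difference_estimate_general Δt M c C₀ hc θ p hθ hθper hp hpbdd hdiffeo
    hequiv hdetlb hdetub
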